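/- arXiv:2110.06855 — 2 statements merged into one kernel-verified Lean document; each statement's English description precedes it below -/
import Mathlib

section
/- Let ε ∈ (0, 1/100) and C ≥ 1. There exists a constant C' depending only on ε and C such that the following holds for all integers X ≥ 2 and all integers h with 1 ≤ h ≤ X^{2/3}. Let a : ℕ → ℝ satisfy: (i) |a(n)| ≤ C n^ε for all n ≥ 1; (ii) ∑_{n=1}^{N} a(n)² ≤ C N for all N ≥ 1; (iii) |∑_{n=M}^{N} a(n) a(n+l)| ≤ C X^{2/3+ε} for all integers M, N with X ≤ M ≤ N ≤ 3X and all integers l with 1 ≤ l ≤ h. Then (1/X) ∑_{x=X}^{2X} | (1/h) ∑_{n=x}^{x+h} a(n) |² ≤ C' · max(h^{−1}, X^{−1/3+2ε}). -/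
open Finset

lemma sum_Icc_shift (f : ℕ → ℝ) (A B j : ℕ) :
    ∑ x ∈ Icc A B, f (x + j) = ∑ n ∈ Icc (A+j) (B+j), f n := by
  rw [← Finset.map_add_right_Icc, Finset.sum_map]; rfl

lemma sum_Icc_window (x h : ℕ) (f : ℕ → ℝ) :
    ∑ n ∈ Icc x (x+h), f n = ∑ j ∈ range (h+1), f (x + j) := by
  rw [Nat.range_eq_Icc_zero_sub_one _ (Nat.succ_ne_zero h)]
  norm_num
  rw [show Icc x (x+h) = (Icc 0 h).map (addLeftEmbedding x) by
    rw [Finset.map_add_left_Icc]; simp]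
  rw [Finset.sum_map]
  rfl

theorem stmt_0 (ε C : ℝ) (hε : ε ∈ Set.Ioo (0 : ℝ) (1/100)) (hC : 1 ≤ C) :
    ∃ C' : ℝ, ∀ X h : ℕ, 2 ≤ X → 1 ≤ h → (h : ℝ) ≤ (X : ℝ) ^ ((2 : ℝ)/3) →
    ∀ a : ℕ → ℝ,
      (∀ n : ℕ, 1 ≤ n → |a n| ≤ C * (n : ℝ) ^ ε) →
      (∀ N : ℕ, 1 ≤ N → ∑ n ∈ Finset.Icc 1 N, (a n) ^ 2 ≤ C * N) →
      (∀ M N : ℕ, X ≤ M → M ≤ N → N ≤ 3 * X → ∀ l : ℕ, 1 ≤ l → l ≤ h →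
        |∑ n ∈ Finset.Icc M N, a n * a (n + l)| ≤ C * (X : ℝ) ^ ((2 : ℝ)/3 + ε)) →
      (1 / (X : ℝ)) * ∑ x ∈ Finset.Icc X (2 * X),
          ((1 / (h : ℝ)) * ∑ n ∈ Finset.Icc x (x + h), a n) ^ 2
        ≤ C' * max ((h : ℝ)⁻¹) ((X : ℝ) ^ (-(1 : ℝ)/3 + 2 * ε)) := by
  obtain ⟨hε0, hε1⟩ := hε
  refine ⟨8 * C, ?_⟩
  intro X h hX hh hhX a _ ha2 ha3
  have hX0 : (0:ℝ) < (X:ℝ) := by exact_mod_cast Nat.lt_of_lt_of_le two_pos hX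
  have hX1 : (1:ℝ) ≤ (X:ℝ) := by exact_mod_cast Nat.one_le_of_lt hX
  have hh0 : (0:ℝ) < (h:ℝ) := by exact_mod_cast hh
  -- h ≤ X
  have hhXn : h ≤ X := by
    have h1 : (X:ℝ) ^ ((2:ℝ)/3) ≤ (X:ℝ) ^ (1:ℝ) :=
      Real.rpow_le_rpow_of_exponent_le hX1 (by norm_num)
    rw [Real.rpow_one] at h1
    exact_mod_cast hhX.trans h1
  set M : ℝ := max ((h : ℝ)⁻¹) ((X : ℝ) ^ (-(1 : ℝ)/3 + 2 * ε)) with hM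
  have hMh : (h:ℝ)⁻¹ ≤ M := le_max_left _ _
  have hM0 : 0 ≤ M := le_trans (by positivity) hMh
  -- bound on X^{2/3+ε}
  have hXe : (X:ℝ) ^ ((2:ℝ)/3 + ε) ≤ (X:ℝ) * M := by
    have h1 : (X:ℝ) ^ ((2:ℝ)/3 + ε) ≤ (X:ℝ) ^ ((1:ℝ) + (-(1:ℝ)/3 + 2*ε)) :=
      Real.rpow_le_rpow_of_exponent_le hX1 (by linarith)
    have h2 : (X:ℝ) ^ ((1:ℝ) + (-(1:ℝ)/3 + 2*ε)) = (X:ℝ) * (X:ℝ) ^ (-(1:ℝ)/3 + 2*ε) := by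
      rw [Real.rpow_add hX0, Real.rpow_one]
    calc (X:ℝ) ^ ((2:ℝ)/3 + ε) ≤ (X:ℝ) * (X:ℝ) ^ (-(1:ℝ)/3 + 2*ε) := by rw [← h2]; exact h1
      _ ≤ (X:ℝ) * M := by
          apply mul_le_mul_of_nonneg_left (le_max_right _ _) (le_of_lt hX0)
  -- diagonal bound
  have hdiag : ∀ j ∈ range (h+1), ∑ x ∈ Icc X (2*X), a (x+j) * a (x+j) ≤ 3*C*(X:ℝ) := by
    intro j hj
    rw [mem_range, Nat.lt_succ_iff] at hj
    rw [sum_Icc_shift (fun n => a n * a n) X (2*X) j]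
    have hsub : Icc (X+j) (2*X+j) ⊆ Icc 1 (2*X+h) := by
      apply Icc_subset_Icc <;> omega
    have h1 : ∑ n ∈ Icc (X+j) (2*X+j), a n * a n ≤ ∑ n ∈ Icc 1 (2*X+h), a n * a n := by
      apply Finset.sum_le_sum_of_subset_of_nonneg hsub
      intro i _ _; exact mul_self_nonneg _
    have h2 : ∑ n ∈ Icc 1 (2*X+h), a n * a n ≤ C * ((2*X+h : ℕ) : ℝ) := by
      have := ha2 (2*X+h) (by omega)
      simpa [sq] using this
    have h3 : ((2*X+h : ℕ) : ℝ) ≤ 3*(X:ℝ) := by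
      push_cast
      have : (h:ℝ) ≤ (X:ℝ) := by exact_mod_cast hhXn
      linarith
    calc ∑ n ∈ Icc (X+j) (2*X+j), a n * a n ≤ C * ((2*X+h : ℕ) : ℝ) := h1.trans h2
      _ ≤ C * (3*(X:ℝ)) := by
          apply mul_le_mul_of_nonneg_left h3 (by linarith)
      _ = 3*C*(X:ℝ) := by ring
  -- off-diagonal bound
  have hofflt : ∀ j k : ℕ, j ≤ h → k ≤ h → j < k →
      |∑ x ∈ Icc X (2*X), a (x+j) * a (x+k)| ≤ C * (X:ℝ) ^ ((2:ℝ)/3 + ε) := by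
    intro j k hjh hkh hjk
    set l := k - j with hl
    have hkl : k = j + l := by omega
    have e : ∑ x ∈ Icc X (2*X), a (x+j) * a (x+k)
        = ∑ n ∈ Icc (X+j) (2*X+j), a n * a (n + l) := by
      rw [← sum_Icc_shift (fun n => a n * a (n+l)) X (2*X) j]
      apply Finset.sum_congr rfl
      intro x _
      have : x + k = x + j + l := by omega
      rw [this]
    rw [e]
    exact ha3 (X+j) (2*X+j) (by omega) (by omega) (by omega) l (by omega) (by omega)
  have hoff : ∀ j k : ℕ, j ≤ h → k ≤ h → j ≠ k →
      |∑ x ∈ Icc X (2*X), a (x+j) * a (x+k)| ≤ C * (X:ℝ) ^ ((2:ℝ)/3 + ε) := by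
    intro j k hjh hkh hne
    rcases lt_or_gt_of_ne hne with hlt | hgt
    · exact hofflt j k hjh hkh hlt
    · have e : ∑ x ∈ Icc X (2*X), a (x+j) * a (x+k)
          = ∑ x ∈ Icc X (2*X), a (x+k) * a (x+j) := by
        apply Finset.sum_congr rfl; intro x _; ring
      rw [e]
      exact hofflt k j hkh hjh hgt
  -- rewrite LHS
  have key : ∑ x ∈ Icc X (2*X), ((1/(h:ℝ)) * ∑ n ∈ Icc x (x+h), a n) ^ 2
      = (1/(h:ℝ))^2 * ∑ j ∈ range (h+1), ∑ k ∈ range (h+1),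
          ∑ x ∈ Icc X (2*X), a (x+j) * a (x+k) := by
    have e1 : ∀ x ∈ Icc X (2*X), ((1/(h:ℝ)) * ∑ n ∈ Icc x (x+h), a n) ^ 2
        = (1/(h:ℝ))^2 * ∑ j ∈ range (h+1), ∑ k ∈ range (h+1), a (x+j) * a (x+k) := by
      intro x _
      rw [mul_pow, sum_Icc_window x h a, sq (∑ j ∈ range (h+1), a (x + j)),
        Finset.sum_mul_sum]
    rw [Finset.sum_congr rfl e1, ← Finset.mul_sum]
    congr 1
    rw [Finset.sum_comm]
    apply Finset.sum_congr rfl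
    intro j _
    exact Finset.sum_comm
  rw [key]
  -- bound the double sum
  have hsplit : ∑ j ∈ range (h+1), ∑ k ∈ range (h+1), ∑ x ∈ Icc X (2*X), a (x+j) * a (x+k)
      ≤ 6*C*(h:ℝ)*(X:ℝ) + 2*C*(h:ℝ)^2*((X:ℝ) ^ ((2:ℝ)/3 + ε)) := by
    have step : ∀ j ∈ range (h+1),
        ∑ k ∈ range (h+1), ∑ x ∈ Icc X (2*X), a (x+j) * a (x+k)
        ≤ 3*C*(X:ℝ) + (h:ℝ) * (C * (X:ℝ) ^ ((2:ℝ)/3 + ε)) := by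
      intro j hj
      have hjmem : j ∈ range (h+1) := hj
      rw [← Finset.add_sum_erase _ _ hjmem]
      have hb1 := hdiag j hj
      have hb2 : ∑ k ∈ (range (h+1)).erase j, ∑ x ∈ Icc X (2*X), a (x+j) * a (x+k)
          ≤ (h:ℝ) * (C * (X:ℝ) ^ ((2:ℝ)/3 + ε)) := by
        have hcard : ((range (h+1)).erase j).card = h := by
          rw [Finset.card_erase_of_mem hjmem, Finset.card_range]; omega
        calc ∑ k ∈ (range (h+1)).erase j, ∑ x ∈ Icc X (2*X), a (x+j) * a (x+k)
            ≤ ∑ k ∈ (range (h+1)).erase j, |∑ x ∈ Icc X (2*X), a (x+j) * a (x+k)| :=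
              Finset.sum_le_sum fun k _ => le_abs_self _
          _ ≤ ∑ k ∈ (range (h+1)).erase j, C * (X:ℝ) ^ ((2:ℝ)/3 + ε) := by
              apply Finset.sum_le_sum
              intro k hk
              have hkj : k ≠ j := Finset.ne_of_mem_erase hk
              have hkr : k ∈ range (h+1) := Finset.mem_of_mem_erase hk
              rw [mem_range, Nat.lt_succ_iff] at hj hkr
              exact hoff j k hj hkr (Ne.symm hkj)
          _ = (h:ℝ) * (C * (X:ℝ) ^ ((2:ℝ)/3 + ε)) := by
              rw [Finset.sum_const, hcard, nsmul_eq_mul]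
      linarith
    calc ∑ j ∈ range (h+1), ∑ k ∈ range (h+1), ∑ x ∈ Icc X (2*X), a (x+j) * a (x+k)
        ≤ ∑ j ∈ range (h+1), (3*C*(X:ℝ) + (h:ℝ) * (C * (X:ℝ) ^ ((2:ℝ)/3 + ε))) :=
          Finset.sum_le_sum step
      _ = ((h:ℝ)+1) * (3*C*(X:ℝ) + (h:ℝ) * (C * (X:ℝ) ^ ((2:ℝ)/3 + ε))) := by
          rw [Finset.sum_const, Finset.card_range, nsmul_eq_mul]; push_cast; ring
      _ ≤ 2*(h:ℝ) * (3*C*(X:ℝ) + (h:ℝ) * (C * (X:ℝ) ^ ((2:ℝ)/3 + ε))) := by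
          have h1 : (1:ℝ) ≤ (h:ℝ) := by exact_mod_cast hh
          apply mul_le_mul_of_nonneg_right (by linarith)
          have hC0 : (0:ℝ) ≤ C := by linarith
          have t1 : (0:ℝ) ≤ 3*C*(X:ℝ) := by positivity
          have hXe0 : (0:ℝ) ≤ (X:ℝ) ^ ((2:ℝ)/3 + ε) := Real.rpow_nonneg hX0.le _
          have t2 : (0:ℝ) ≤ (h:ℝ) * (C * (X:ℝ) ^ ((2:ℝ)/3 + ε)) := by positivity
          linarith
      _ = 6*C*(h:ℝ)*(X:ℝ) + 2*C*(h:ℝ)^2*((X:ℝ) ^ ((2:ℝ)/3 + ε)) := by ring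
  -- final arithmetic
  have hT2 : ∑ j ∈ range (h+1), ∑ k ∈ range (h+1), ∑ x ∈ Icc X (2*X), a (x+j) * a (x+k)
      ≤ 6*C*(h:ℝ)*(X:ℝ) + 2*C*(h:ℝ)^2*((X:ℝ)*M) := by
    have : 2*C*(h:ℝ)^2*((X:ℝ) ^ ((2:ℝ)/3 + ε)) ≤ 2*C*(h:ℝ)^2*((X:ℝ)*M) := by
      apply mul_le_mul_of_nonneg_left hXe
      positivity
    linarith
  calc (1/(X:ℝ)) * ((1/(h:ℝ))^2 * ∑ j ∈ range (h+1), ∑ k ∈ range (h+1),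
          ∑ x ∈ Icc X (2*X), a (x+j) * a (x+k))
      ≤ (1/(X:ℝ)) * ((1/(h:ℝ))^2 * (6*C*(h:ℝ)*(X:ℝ) + 2*C*(h:ℝ)^2*((X:ℝ)*M))) := by
        apply mul_le_mul_of_nonneg_left _ (by positivity)
        apply mul_le_mul_of_nonneg_left hT2 (by positivity)
    _ = 6*C*(h:ℝ)⁻¹ + 2*C*M := by
        field_simp
    _ ≤ 6*C*M + 2*C*M := by
        have : 6*C*(h:ℝ)⁻¹ ≤ 6*C*M := by
          apply mul_le_mul_of_nonneg_left hMh (by linarith)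
        linarith
    _ = 8*C*M := by ring
end

section
/- Let ε ∈ (0, 1/100) and C ≥ 1. There exists a constant C' depending only on ε and C such that the following holds for all integers X ≥ 2 and all integers h with 1 ≤ h ≤ X^{2/3}. Let a : ℕ → ℝ satisfy: (i) |a(n)| ≤ C n^ε for all n ≥ 1; (ii) ∑_{n=1}^{N} a(n)² ≤ C N for all N ≥ 1; (iii) |∑_{n=M}^{N} a(n) a(n+l)| ≤ C X^{2/3+ε} for all integers M, N with X ≤ M ≤ N ≤ 3X and all integers l with 1 ≤ l ≤ h. Then for every real δ > 0, the number of integers x with X ≤ x ≤ 2X for which |∑_{n=x}^{x+h} a(n)| > δ · h · max(h^{−1/2}, X^{−1/6+ε}) is at most C' X / δ². -/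
open Finset

lemma shift_sum' (g : ℕ → ℝ) (A B i : ℕ) :
    ∑ x ∈ Icc A B, g (x + i) = ∑ n ∈ Icc (A + i) (B + i), g n := by
  rw [← Finset.map_add_right_Icc, Finset.sum_map]; rfl

theorem stmt_1 (ε C : ℝ) (hε : ε ∈ Set.Ioo (0 : ℝ) (1/100)) (hC : 1 ≤ C) :
    ∃ C' : ℝ, ∀ X h : ℕ, 2 ≤ X → 1 ≤ h → (h : ℝ) ≤ (X : ℝ) ^ ((2 : ℝ)/3) →
    ∀ a : ℕ → ℝ,
      (∀ n : ℕ, 1 ≤ n → |a n| ≤ C * (n : ℝ) ^ ε) →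
      (∀ N : ℕ, 1 ≤ N → ∑ n ∈ Finset.Icc 1 N, (a n) ^ 2 ≤ C * N) →
      (∀ M N : ℕ, X ≤ M → M ≤ N → N ≤ 3 * X → ∀ l : ℕ, 1 ≤ l → l ≤ h →
        |∑ n ∈ Finset.Icc M N, a n * a (n + l)| ≤ C * (X : ℝ) ^ ((2 : ℝ)/3 + ε)) →
      ∀ δ : ℝ, 0 < δ →
        (((Finset.Icc X (2 * X)).filter (fun x =>
            δ * (h : ℝ) * max ((h : ℝ) ^ (-(1 : ℝ)/2)) ((X : ℝ) ^ (-(1 : ℝ)/6 + ε))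
              < |∑ n ∈ Finset.Icc x (x + h), a n|)).card : ℝ)
          ≤ C' * (X : ℝ) / δ ^ 2 := by
  obtain ⟨hε0, hε1⟩ := hε
  refine ⟨10 * C, ?_⟩
  intro X h hX hh hhX a ha1 ha2 ha3 δ hδ
  have hC0 : (0:ℝ) < C := lt_of_lt_of_le one_pos hC
  have hXR : (2:ℝ) ≤ (X:ℝ) := by exact_mod_cast hX
  have hX1 : (1:ℝ) ≤ (X:ℝ) := by linarith
  have hX0 : (0:ℝ) < (X:ℝ) := by linarith
  have hhR : (1:ℝ) ≤ (h:ℝ) := by exact_mod_cast hh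
  have hh0 : (0:ℝ) < (h:ℝ) := by linarith
  -- h ≤ X
  have hhX' : (h:ℝ) ≤ (X:ℝ) := by
    calc (h:ℝ) ≤ (X:ℝ) ^ ((2:ℝ)/3) := hhX
    _ ≤ (X:ℝ) ^ (1:ℝ) := Real.rpow_le_rpow_of_exponent_le hX1 (by norm_num)
    _ = X := Real.rpow_one _
  have hhXn : h ≤ X := by exact_mod_cast hhX'
  set M : ℝ := max ((h : ℝ) ^ (-(1 : ℝ)/2)) ((X : ℝ) ^ (-(1 : ℝ)/6 + ε)) with hM
  have hM0 : 0 < M := lt_max_of_lt_left (Real.rpow_pos_of_pos hh0 _)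
  have hMh : (h:ℝ)⁻¹ ≤ M ^ 2 := by
    have h1 : (h : ℝ) ^ (-(1 : ℝ)/2) ≤ M := le_max_left _ _
    have h2 : ((h : ℝ) ^ (-(1 : ℝ)/2)) ^ 2 ≤ M ^ 2 :=
      pow_le_pow_left₀ (Real.rpow_nonneg hh0.le _) h1 2
    calc (h:ℝ)⁻¹ = (h:ℝ) ^ (-(1:ℝ)) := by rw [Real.rpow_neg_one]
    _ = ((h : ℝ) ^ (-(1 : ℝ)/2)) ^ 2 := by
        rw [← Real.rpow_natCast ((h : ℝ) ^ (-(1 : ℝ)/2)) 2, ← Real.rpow_mul hh0.le]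
        norm_num
    _ ≤ M ^ 2 := h2
  have hMX : (X:ℝ) ^ (-(1:ℝ)/3 + 2*ε) ≤ M ^ 2 := by
    have h1 : (X : ℝ) ^ (-(1 : ℝ)/6 + ε) ≤ M := le_max_right _ _
    have h2 : ((X : ℝ) ^ (-(1 : ℝ)/6 + ε)) ^ 2 ≤ M ^ 2 :=
      pow_le_pow_left₀ (Real.rpow_nonneg hX0.le _) h1 2
    calc (X:ℝ) ^ (-(1:ℝ)/3 + 2*ε) = ((X : ℝ) ^ (-(1 : ℝ)/6 + ε)) ^ 2 := by
          rw [← Real.rpow_natCast ((X : ℝ) ^ (-(1 : ℝ)/6 + ε)) 2, ← Real.rpow_mul hX0.le]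
          ring_nf
    _ ≤ M ^ 2 := h2
  -- key mean square bound
  have key : ∑ x ∈ Icc X (2*X), (∑ n ∈ Icc x (x+h), a n)^2
      ≤ 6*C*h*X + 4*C*(h:ℝ)^2*(X:ℝ)^((2:ℝ)/3+ε) := by
    have expand : ∀ x ∈ Icc X (2*X), (∑ n ∈ Icc x (x+h), a n)^2
        = ∑ i ∈ Icc 0 h, ∑ j ∈ Icc 0 h, a (x+i) * a (x+j) := by
      intro x _
      have hs : ∑ n ∈ Icc x (x+h), a n = ∑ i ∈ Icc 0 h, a (x+i) := by
        have := shift_sum' a 0 h x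
        simp only [Nat.zero_add] at this
        rw [show ∑ i ∈ Icc 0 h, a (x+i) = ∑ i ∈ Icc 0 h, a (i+x) from
          Finset.sum_congr rfl fun i _ => by rw [Nat.add_comm], this,
          show h + x = x + h from Nat.add_comm _ _]
      rw [hs, sq, Finset.sum_mul_sum]
    rw [Finset.sum_congr rfl expand]
    rw [Finset.sum_comm]
    have swap2 : ∀ i ∈ Icc 0 h, ∑ x ∈ Icc X (2*X), ∑ j ∈ Icc 0 h, a (x+i) * a (x+j)
        = ∑ j ∈ Icc 0 h, ∑ x ∈ Icc X (2*X), a (x+i) * a (x+j) := fun i _ => Finset.sum_comm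
    rw [Finset.sum_congr rfl swap2]
    -- bound each inner sum
    have inner : ∀ i ∈ Icc 0 h, ∀ j ∈ Icc 0 h,
        ∑ x ∈ Icc X (2*X), a (x+i) * a (x+j)
          ≤ if i = j then 3*C*X else C*(X:ℝ)^((2:ℝ)/3+ε) := by
      intro i hi j hj
      simp only [Finset.mem_Icc] at hi hj
      by_cases hij : i = j
      · subst hij
        simp only [if_pos rfl]
        have : ∑ x ∈ Icc X (2*X), a (x+i) * a (x+i)
            = ∑ n ∈ Icc (X+i) (2*X+i), a n ^ 2 := by
          rw [shift_sum' (fun n => a n * a n) X (2*X) i]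
          exact Finset.sum_congr rfl fun n _ => (sq (a n)).symm
        rw [this]
        calc ∑ n ∈ Icc (X+i) (2*X+i), a n ^ 2
            ≤ ∑ n ∈ Icc 1 (3*X), a n ^ 2 := by
              apply Finset.sum_le_sum_of_subset_of_nonneg
              · apply Finset.Icc_subset_Icc <;> omega
              · intro n _ _; positivity
        _ ≤ C * (3*X : ℕ) := ha2 (3*X) (by omega)
        _ = 3*C*X := by push_cast; ring
      · simp only [if_neg hij]
        -- wlog-type case split
        rcases Nat.lt_or_ge i j with hlt | hge
        · have heq : ∑ x ∈ Icc X (2*X), a (x+i) * a (x+j)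
              = ∑ n ∈ Icc (X+i) (2*X+i), a n * a (n + (j-i)) := by
            rw [← shift_sum' (fun n => a n * a (n + (j-i))) X (2*X) i]
            exact Finset.sum_congr rfl fun x _ => by
              rw [show x + i + (j - i) = x + j from by omega]
          rw [heq]
          exact le_trans (le_abs_self _)
            (ha3 (X+i) (2*X+i) (by omega) (by omega) (by omega) (j-i) (by omega) (by omega))
        · have hlt : j < i := by omega
          have heq : ∑ x ∈ Icc X (2*X), a (x+i) * a (x+j)
              = ∑ n ∈ Icc (X+j) (2*X+j), a n * a (n + (i-j)) := by
            rw [← shift_sum' (fun n => a n * a (n + (i-j))) X (2*X) j]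
            exact Finset.sum_congr rfl fun x _ => by
              rw [show x + j + (i - j) = x + i from by omega, mul_comm]
          rw [heq]
          exact le_trans (le_abs_self _)
            (ha3 (X+j) (2*X+j) (by omega) (by omega) (by omega) (i-j) (by omega) (by omega))
    calc ∑ i ∈ Icc 0 h, ∑ j ∈ Icc 0 h, ∑ x ∈ Icc X (2*X), a (x+i) * a (x+j)
        ≤ ∑ i ∈ Icc 0 h, ∑ j ∈ Icc 0 h,
            (if i = j then 3*C*(X:ℝ) else C*(X:ℝ)^((2:ℝ)/3+ε)) :=
          Finset.sum_le_sum fun i hi => Finset.sum_le_sum fun j hj => inner i hi j hj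
    _ ≤ ∑ i ∈ Icc 0 h, (3*C*(X:ℝ) + (h+1) * (C*(X:ℝ)^((2:ℝ)/3+ε))) := by
        apply Finset.sum_le_sum
        intro i hi
        have hXe : (0:ℝ) ≤ C*(X:ℝ)^((2:ℝ)/3+ε) := by positivity
        calc ∑ j ∈ Icc 0 h, (if i = j then 3*C*(X:ℝ) else C*(X:ℝ)^((2:ℝ)/3+ε))
            ≤ ∑ j ∈ Icc 0 h, ((if i = j then 3*C*(X:ℝ) else 0) + C*(X:ℝ)^((2:ℝ)/3+ε)) := by
              apply Finset.sum_le_sum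
              intro j _
              by_cases hij : i = j <;> simp [hij]
              · linarith
        _ = (∑ j ∈ Icc 0 h, (if i = j then 3*C*(X:ℝ) else 0))
              + (h+1) * (C*(X:ℝ)^((2:ℝ)/3+ε)) := by
            rw [Finset.sum_add_distrib, Finset.sum_const, Nat.card_Icc]
            push_cast
            ring_nf
        _ ≤ 3*C*(X:ℝ) + (h+1) * (C*(X:ℝ)^((2:ℝ)/3+ε)) := by
            have : (∑ j ∈ Icc 0 h, (if i = j then 3*C*(X:ℝ) else 0)) = 3*C*(X:ℝ) := by
              rw [Finset.sum_ite_eq]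
              simp [Finset.mem_Icc.mpr ⟨Nat.zero_le i, Finset.mem_Icc.mp hi |>.2⟩]
            linarith
    _ = (h+1) * (3*C*(X:ℝ) + (h+1) * (C*(X:ℝ)^((2:ℝ)/3+ε))) := by
        rw [Finset.sum_const, Nat.card_Icc]; push_cast; ring
    _ ≤ 6*C*h*X + 4*C*(h:ℝ)^2*(X:ℝ)^((2:ℝ)/3+ε) := by
        have h1 : ((h:ℝ)+1) ≤ 2*h := by linarith
        have p1 : (0:ℝ) ≤ 3*C*X := by positivity
        have p2 : (0:ℝ) ≤ C*(X:ℝ)^((2:ℝ)/3+ε) := by positivity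
        have e1 : ((h:ℝ)+1)*(3*C*X) ≤ 2*(h:ℝ)*(3*C*X) := mul_le_mul_of_nonneg_right h1 p1
        have e2 : ((h:ℝ)+1)*(((h:ℝ)+1)*(C*(X:ℝ)^((2:ℝ)/3+ε)))
            ≤ (2*(h:ℝ))*((2*(h:ℝ))*(C*(X:ℝ)^((2:ℝ)/3+ε))) :=
          mul_le_mul h1 (mul_le_mul_of_nonneg_right h1 p2) (by positivity) (by positivity)
        nlinarith [e1, e2]
  -- Chebyshev
  set T : ℝ := δ * (h:ℝ) * M with hT
  have hT0 : 0 < T := by positivity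
  set F := (Finset.Icc X (2 * X)).filter (fun x =>
      δ * (h : ℝ) * M < |∑ n ∈ Finset.Icc x (x + h), a n|) with hF
  have cheb : (F.card : ℝ) * T^2 ≤ ∑ x ∈ Icc X (2*X), (∑ n ∈ Icc x (x+h), a n)^2 := by
    calc (F.card : ℝ) * T^2 = ∑ _x ∈ F, T^2 := by rw [Finset.sum_const, nsmul_eq_mul]
    _ ≤ ∑ x ∈ F, (∑ n ∈ Icc x (x+h), a n)^2 := by
        apply Finset.sum_le_sum
        intro x hx
        have hx' := (Finset.mem_filter.mp hx).2
        have : T ≤ |∑ n ∈ Icc x (x+h), a n| := le_of_lt hx'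
        calc T^2 ≤ |∑ n ∈ Icc x (x+h), a n|^2 := pow_le_pow_left₀ hT0.le this 2
        _ = (∑ n ∈ Icc x (x+h), a n)^2 := sq_abs _
    _ ≤ ∑ x ∈ Icc X (2*X), (∑ n ∈ Icc x (x+h), a n)^2 := by
        apply Finset.sum_le_sum_of_subset_of_nonneg (Finset.filter_subset _ _)
        intro x _ _; positivity
  -- final arithmetic
  have final : 6*C*(h:ℝ)*X + 4*C*(h:ℝ)^2*(X:ℝ)^((2:ℝ)/3+ε) ≤ (10*C*X/δ^2) * T^2 := by
    have hT2 : T^2 = δ^2 * (h:ℝ)^2 * M^2 := by rw [hT]; ring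
    rw [hT2, show (10*C*(X:ℝ)/δ^2) * (δ^2 * (h:ℝ)^2 * M^2) = 10*C*X*((h:ℝ)^2*M^2) from by
      field_simp]
    have b1 : (h:ℝ) ≤ (h:ℝ)^2 * M^2 := by
      calc (h:ℝ) = (h:ℝ)^2 * (h:ℝ)⁻¹ := by field_simp
      _ ≤ (h:ℝ)^2 * M^2 := by
          apply mul_le_mul_of_nonneg_left hMh (by positivity)
    have b2 : (X:ℝ)^((2:ℝ)/3+ε) ≤ (X:ℝ) * M^2 := by
      calc (X:ℝ)^((2:ℝ)/3+ε) ≤ (X:ℝ)^((2:ℝ)/3+2*ε) :=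
            Real.rpow_le_rpow_of_exponent_le hX1 (by linarith)
      _ = (X:ℝ)^(1:ℝ) * (X:ℝ)^(-(1:ℝ)/3+2*ε) := by
          rw [← Real.rpow_add hX0]; ring_nf
      _ = (X:ℝ) * (X:ℝ)^(-(1:ℝ)/3+2*ε) := by rw [Real.rpow_one]
      _ ≤ (X:ℝ) * M^2 := mul_le_mul_of_nonneg_left hMX hX0.le
    have c1 : 6*C*(X:ℝ)*(h:ℝ) ≤ 6*C*(X:ℝ)*((h:ℝ)^2*M^2) :=
      mul_le_mul_of_nonneg_left b1 (by positivity)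
    have c2 : 4*C*(h:ℝ)^2*((X:ℝ)^((2:ℝ)/3+ε)) ≤ 4*C*(h:ℝ)^2*((X:ℝ)*M^2) :=
      mul_le_mul_of_nonneg_left b2 (by positivity)
    nlinarith [c1, c2]
  have hfin : (F.card : ℝ) * T^2 ≤ (10*C*(X:ℝ)/δ^2) * T^2 := le_trans cheb (le_trans key final)
  exact le_of_mul_le_mul_right hfin (by positivity)
end
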